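/- Let 0 < p_- ≤ p_n < q_n < ∞ for all n. If limsup_{n→∞} 1/(1/p_n - 1/q_n) = ∞, then the natural embedding id: ℓ_{p_n} → ℓ_{q_n} is not strictly singular. -/

import Mathlib

open scoped ENNReal

/-- Luxemburg quasi-norm of `ℓ_{p_n}` (finite exponents), `∞` if no admissible `λ`. -/
noncomputable def vNorm (p : ℕ → ℝ) (a : ℕ → ℝ) : ℝ≥0∞ :=
  sInf {l : ℝ≥0∞ | 0 < l ∧ l ≠ ⊤ ∧
    (∑' n, ENNReal.ofReal ((|a n| / l.toReal) ^ p n)) ≤ 1}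

/-- The natural embedding `id : ℓ_{p_n} → ℓ_{q_n}` is strictly singular. -/
def StrictlySingularEmb (p q : ℕ → ℝ) : Prop :=
  ¬ ∃ E : Submodule ℝ (ℕ → ℝ), (¬ Module.Finite ℝ E) ∧
      (∀ a ∈ E, vNorm p a ≠ ⊤) ∧
      ∃ c : ℝ, 0 < c ∧ ∀ a ∈ E, ENNReal.ofReal c * vNorm p a ≤ vNorm q a

/-- Pointwise key estimate. -/
lemma key_pt {pm pp qq c0 t : ℝ} (hpm : 0 < pm) (hpmp : pm ≤ pp) (hpq : pp < qq)
    (hc0 : 0 < c0) (ht : 0 ≤ t) :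
    ((c0 / 2) * t) ^ pp ≤ (1 / 2 : ℝ) ^ pm * t ^ qq + c0 ^ (1 / (1 / pp - 1 / qq)) := by
  have hp0 : 0 < pp := lt_of_lt_of_le hpm hpmp
  have hq0 : 0 < qq := hp0.trans hpq
  have hqp : 0 < qq - pp := by linarith
  rcases eq_or_lt_of_le ht with h0 | ht0
  · rw [← h0, mul_zero, Real.zero_rpow hp0.ne']
    positivity
  by_cases hcase : c0 ^ pp * t ^ pp ≤ t ^ qq
  · have h1 : ((c0 / 2) * t) ^ pp = (1/2 : ℝ) ^ pp * (c0 ^ pp * t ^ pp) := by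
      rw [div_eq_mul_one_div c0 2, mul_assoc, mul_comm c0, ← mul_assoc]
      rw [Real.mul_rpow (by positivity) (by positivity),
        Real.mul_rpow (by positivity) ht]
      ring
    have h2 : (1/2 : ℝ) ^ pp ≤ (1/2 : ℝ) ^ pm :=
      Real.rpow_le_rpow_of_exponent_ge (by norm_num) (by norm_num) hpmp
    calc ((c0 / 2) * t) ^ pp = (1/2 : ℝ) ^ pp * (c0 ^ pp * t ^ pp) := h1
      _ ≤ (1/2 : ℝ) ^ pm * t ^ qq := by
          apply mul_le_mul h2 hcase (by positivity) (by positivity)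
      _ ≤ _ := le_add_of_nonneg_right (by positivity)
  · push_neg at hcase
    have hsplit : t ^ qq = t ^ (qq - pp) * t ^ pp := by
      rw [← Real.rpow_add ht0]; ring_nf
    have h3 : t ^ (qq - pp) < c0 ^ pp := by
      have hpt : 0 < t ^ pp := Real.rpow_pos_of_pos ht0 _
      rw [hsplit] at hcase
      exact lt_of_mul_lt_mul_right hcase hpt.le
    have h4 : t ≤ c0 ^ (pp / (qq - pp)) := by
      have := Real.rpow_le_rpow (by positivity) h3.le
        (le_of_lt (by positivity : (0:ℝ) < 1/(qq-pp)))
      rwa [← Real.rpow_mul ht, ← Real.rpow_mul hc0.le, mul_one_div,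
        div_self hqp.ne', Real.rpow_one, mul_one_div] at this
    have h5 : (c0/2) * t ≤ c0 ^ (qq / (qq - pp)) := by
      have hct : c0 * t ≤ c0 * c0 ^ (pp / (qq - pp)) :=
        mul_le_mul_of_nonneg_left h4 hc0.le
      calc (c0/2) * t ≤ c0 * t := by nlinarith
        _ ≤ c0 * c0 ^ (pp / (qq - pp)) := hct
        _ = c0 ^ (qq / (qq - pp)) := by
            rw [← Real.rpow_one_add' hc0.le (by positivity)]
            congr 1; field_simp; ring
    have h6 : ((c0/2) * t) ^ pp ≤ (c0 ^ (qq / (qq - pp))) ^ pp :=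
      Real.rpow_le_rpow (by positivity) h5 hp0.le
    have h7 : (c0 ^ (qq / (qq - pp))) ^ pp = c0 ^ (1 / (1 / pp - 1 / qq)) := by
      rw [← Real.rpow_mul hc0.le]
      congr 1
      field_simp
    calc ((c0/2) * t) ^ pp ≤ c0 ^ (1 / (1 / pp - 1 / qq)) := h7 ▸ h6
      _ ≤ _ := le_add_of_nonneg_left (by positivity)

/-- The modular as a finite sum, for finitely supported `a`. -/
lemma modular_eq (r : ℕ → ℝ) (hr : ∀ m, r m ≠ 0) (a : ℕ → ℝ) (F : Finset ℕ)
    (h : ∀ m ∉ F, a m = 0) {lam : ℝ} (hlam : 0 ≤ lam) :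
    (∑' m, ENNReal.ofReal ((|a m| / lam) ^ r m))
      = ENNReal.ofReal (∑ m ∈ F, (|a m| / lam) ^ r m) := by
  rw [tsum_eq_sum (s := F) (fun m hm => by
    rw [h m hm]; simp [Real.zero_rpow (hr m)]),
    ENNReal.ofReal_sum_of_nonneg (fun m _ => Real.rpow_nonneg (by positivity) _)]

/-- Finitely supported sequences have finite Luxemburg quasi-norm. -/
lemma vnorm_ne_top {p : ℕ → ℝ} {pm : ℝ} (hpm0 : 0 < pm) (hle : ∀ n, pm ≤ p n)
    (a : ℕ → ℝ) (F : Finset ℕ) (h : ∀ m ∉ F, a m = 0) : vNorm p a ≠ ⊤ := by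
  have hp0 : ∀ m, 0 < p m := fun m => lt_of_lt_of_le hpm0 (hle m)
  set M := 1 + ∑ m ∈ F, |a m| with hM
  have hM0 : 0 < M := by
    have : (0:ℝ) ≤ ∑ m ∈ F, |a m| := Finset.sum_nonneg fun m _ => abs_nonneg _
    linarith
  set C := (1 + (F.card : ℝ)) ^ (1/pm) with hC
  have hcard0 : (1:ℝ) ≤ 1 + (F.card : ℝ) := by
    have := Nat.cast_nonneg (α := ℝ) F.card; linarith
  have hC1 : 1 ≤ C := Real.one_le_rpow hcard0 (by positivity)
  set lam := M * C with hlam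
  have hlam0 : 0 < lam := by positivity
  have hmem : ENNReal.ofReal lam ∈ {l : ℝ≥0∞ | 0 < l ∧ l ≠ ⊤ ∧
      (∑' n, ENNReal.ofReal ((|a n| / l.toReal) ^ p n)) ≤ 1} := by
    refine ⟨ENNReal.ofReal_pos.mpr hlam0, ENNReal.ofReal_ne_top, ?_⟩
    rw [ENNReal.toReal_ofReal hlam0.le,
      modular_eq p (fun m => (hp0 m).ne') a F h hlam0.le, ENNReal.ofReal_le_one]
    have hterm : ∀ m ∈ F, (|a m| / lam) ^ p m ≤ (1 + (F.card : ℝ))⁻¹ := by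
      intro m hm
      have ham : |a m| ≤ M := by
        have := Finset.single_le_sum (f := fun m => |a m|)
          (fun m _ => abs_nonneg (a m)) hm
        linarith
      have ht : |a m| / lam ≤ C⁻¹ := by
        rw [div_le_iff₀ hlam0, hlam]
        calc |a m| ≤ M := ham
          _ = C⁻¹ * (M * C) := by field_simp
      rcases eq_or_lt_of_le (abs_nonneg (a m)) with h0 | h0
      · rw [← h0]
        simp only [zero_div]
        rw [Real.zero_rpow (hp0 m).ne']
        positivity
      · have ht0 : 0 < |a m| / lam := by positivity
        have ht1 : |a m| / lam ≤ 1 := le_trans ht (by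
          rw [inv_le_one_iff₀]; right; exact hC1)
        calc (|a m| / lam) ^ p m ≤ (|a m| / lam) ^ pm :=
              Real.rpow_le_rpow_of_exponent_ge ht0 ht1 (hle m)
          _ ≤ (C⁻¹) ^ pm := Real.rpow_le_rpow ht0.le ht hpm0.le
          _ = (1 + (F.card : ℝ))⁻¹ := by
              rw [Real.inv_rpow (by positivity), hC, ← Real.rpow_mul (by positivity),
                one_div_mul_cancel hpm0.ne', Real.rpow_one]
    calc ∑ m ∈ F, (|a m| / lam) ^ p m
        ≤ F.card • (1 + (F.card : ℝ))⁻¹ := Finset.sum_le_card_nsmul _ _ _ hterm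
      _ = (F.card : ℝ) * (1 + (F.card : ℝ))⁻¹ := by rw [nsmul_eq_mul]
      _ ≤ 1 := by
          rw [← div_eq_mul_inv, div_le_one (by positivity)]
          have := Nat.cast_nonneg (α := ℝ) F.card; linarith
  exact ne_top_of_le_ne_top ENNReal.ofReal_ne_top (sInf_le hmem)

/-- Sequences supported on `{n k : k < N}` for some `N`. -/
def Esub (n : ℕ → ℕ) : Submodule ℝ (ℕ → ℝ) where
  carrier := {a | ∃ N, ∀ m, a m ≠ 0 → ∃ k < N, n k = m}
  zero_mem' := ⟨0, fun m hm => absurd rfl hm⟩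
  add_mem' := by
    rintro a b ⟨N₁, h₁⟩ ⟨N₂, h₂⟩
    refine ⟨max N₁ N₂, fun m hm => ?_⟩
    by_cases ha : a m = 0
    · have hb : b m ≠ 0 := fun hb => hm (by simp [Pi.add_apply, ha, hb])
      obtain ⟨k, hk, he⟩ := h₂ m hb
      exact ⟨k, lt_of_lt_of_le hk (le_max_right _ _), he⟩
    · obtain ⟨k, hk, he⟩ := h₁ m ha
      exact ⟨k, lt_of_lt_of_le hk (le_max_left _ _), he⟩
  smul_mem' := by
    rintro r a ⟨N, h⟩
    exact ⟨N, fun m hm => h m (fun h0 => hm (by simp [Pi.smul_apply, h0]))⟩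

lemma mem_Esub {n : ℕ → ℕ} {a : ℕ → ℝ} :
    a ∈ Esub n ↔ ∃ N, ∀ m, a m ≠ 0 → ∃ k < N, n k = m := Iff.rfl

lemma Esub_single (n : ℕ → ℕ) (k : ℕ) : Pi.single (n k) (1:ℝ) ∈ Esub n := by
  refine ⟨k + 1, fun m hm => ⟨k, Nat.lt_succ_self _, ?_⟩⟩
  by_contra hne
  exact hm (Pi.single_eq_of_ne (fun h => hne h.symm) _)

lemma Esub_not_finite {n : ℕ → ℕ} (hn : Function.Injective n) :
    ¬ Module.Finite ℝ (Esub n) := by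
  intro hfin
  have h1 : LinearIndependent ℝ (fun k => Pi.single (n k) (1:ℝ) : ℕ → (ℕ → ℝ)) := by
    rw [linearIndependent_iff']
    intro s g hsum i hi
    have h := congrFun hsum (n i)
    have h2 : i ∈ s → g i = 0 := by
      simpa [Finset.sum_apply, Pi.single_apply, hn.eq_iff, Finset.sum_ite_eq] using h
    exact h2 hi
  have h2 : LinearIndependent ℝ
      (fun k => (⟨Pi.single (n k) 1, Esub_single n k⟩ : Esub n)) :=
    h1.of_comp (Esub n).subtype
  exact Module.Finite.not_linearIndependent_of_infinite _ h2

lemma geom_bound {c0 : ℝ} (h0 : 0 ≤ c0) (h1 : c0 ≤ 1/2) (N : ℕ) :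
    ∑ k ∈ Finset.range N, c0 ^ k ≤ 2 - 2 * c0 ^ N := by
  induction N with
  | zero => simp
  | succ N ih =>
    rw [Finset.sum_range_succ]
    have : c0 ^ (N + 1) ≤ (1/2) * c0 ^ N := by
      rw [pow_succ, mul_comm]
      exact mul_le_mul_of_nonneg_right h1 (pow_nonneg h0 N)
    linarith

theorem stmt_10 (p q : ℕ → ℝ) (pm : ℝ) (hpm0 : 0 < pm) (hle : ∀ n, pm ≤ p n)
    (hpq : ∀ n, p n < q n)
    (hlimsup : ∀ M : ℝ, ∃ᶠ n in Filter.atTop, M ≤ 1 / (1 / p n - 1 / q n)) :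
    ¬ StrictlySingularEmb p q := by
  have hp0 : ∀ m, 0 < p m := fun m => lt_of_lt_of_le hpm0 (hle m)
  have hq0 : ∀ m, 0 < q m := fun m => (hp0 m).trans (hpq m)
  have hd0 : ∀ m, 0 < 1 / p m - 1 / q m := fun m => by
    have := one_div_lt_one_div_of_lt (hp0 m) (hpq m); linarith
  obtain ⟨φ, hmono, hφ⟩ := Filter.extraction_forall_of_frequently
    (fun k => hlimsup ((2:ℝ) ^ (k + 1)))
  have hhalf : (1/2:ℝ) ^ pm < 1 := Real.rpow_lt_one (by norm_num) (by norm_num) hpm0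
  set c0 := min (1/2) (Real.sqrt ((1 - (1/2:ℝ) ^ pm)/2)) with hc0def
  have hc00 : 0 < c0 := lt_min (by norm_num) (Real.sqrt_pos.mpr (by linarith))
  have hc05 : c0 ≤ 1/2 := min_le_left _ _
  have hbudget : (1/2:ℝ) ^ pm + 2 * c0 ^ 2 ≤ 1 := by
    have h1 : c0 ≤ Real.sqrt ((1 - (1/2:ℝ) ^ pm)/2) := min_le_right _ _
    have h2 : c0 ^ 2 ≤ (1 - (1/2:ℝ) ^ pm)/2 := by
      have hs := Real.sq_sqrt (by linarith : (0:ℝ) ≤ (1 - (1/2:ℝ) ^ pm)/2)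
      nlinarith [Real.sqrt_nonneg ((1 - (1/2:ℝ) ^ pm)/2), hc00]
    linarith
  intro hSS
  apply hSS
  refine ⟨Esub φ, Esub_not_finite hmono.injective, ?_, c0/2, by positivity, ?_⟩
  · rintro a ⟨N, ha⟩
    refine vnorm_ne_top hpm0 hle a ((Finset.range N).image φ) (fun m hm => ?_)
    by_contra h0
    obtain ⟨k, hk, he⟩ := ha m h0
    exact hm (Finset.mem_image.mpr ⟨k, Finset.mem_range.mpr hk, he⟩)
  · rintro a ⟨N, ha⟩
    set F := (Finset.range N).image φ with hFdef
    have hF : ∀ m ∉ F, a m = 0 := fun m hm => by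
      by_contra h0
      obtain ⟨k, hk, he⟩ := ha m h0
      exact hm (Finset.mem_image.mpr ⟨k, Finset.mem_range.mpr hk, he⟩)
    apply le_sInf
    rintro l ⟨hl0, hlT, hlmod⟩
    have hlam0 : 0 < l.toReal := ENNReal.toReal_pos hl0.ne' hlT
    set lam := l.toReal with hlamdef
    rw [modular_eq q (fun m => (hq0 m).ne') a F hF hlam0.le,
      ENNReal.ofReal_le_one] at hlmod
    have hc20 : (0:ℝ) < c0/2 := by positivity
    set l' := l / ENNReal.ofReal (c0/2) with hl'def
    have hofc : ENNReal.ofReal (c0/2) ≠ 0 := (ENNReal.ofReal_pos.mpr hc20).ne'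
    have hl'T : l' ≠ ⊤ := (ENNReal.div_lt_top hlT hofc).ne
    have hl'0 : 0 < l' := ENNReal.div_pos hl0.ne' ENNReal.ofReal_ne_top
    have hl'toReal : l'.toReal = lam / (c0/2) := by
      rw [hl'def, ENNReal.toReal_div, ENNReal.toReal_ofReal hc20.le]
    have hmodp : (∑' m, ENNReal.ofReal ((|a m| / l'.toReal) ^ p m)) ≤ 1 := by
      rw [modular_eq p (fun m => (hp0 m).ne') a F hF ENNReal.toReal_nonneg,
        ENNReal.ofReal_le_one, hl'toReal]
      have hrw : ∀ m, |a m| / (lam / (c0/2)) = (c0/2) * (|a m| / lam) := fun m => by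
        field_simp
      calc ∑ m ∈ F, (|a m| / (lam / (c0/2))) ^ p m
          ≤ ∑ m ∈ F, ((1/2:ℝ) ^ pm * (|a m| / lam) ^ q m
              + c0 ^ (1 / (1 / p m - 1 / q m))) := by
            refine Finset.sum_le_sum fun m _ => ?_
            rw [hrw m]
            exact key_pt hpm0 (hle m) (hpq m) hc00 (by positivity)
        _ = (1/2:ℝ) ^ pm * (∑ m ∈ F, (|a m| / lam) ^ q m)
              + ∑ m ∈ F, c0 ^ (1 / (1 / p m - 1 / q m)) := by
            rw [Finset.sum_add_distrib, Finset.mul_sum]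
        _ ≤ (1/2:ℝ) ^ pm * 1 + 2 * c0 ^ 2 := by
            refine add_le_add (mul_le_mul_of_nonneg_left hlmod (by positivity)) ?_
            rw [hFdef, Finset.sum_image (fun x _ y _ h => hmono.injective h)]
            calc ∑ k ∈ Finset.range N, c0 ^ (1 / (1 / p (φ k) - 1 / q (φ k)))
                ≤ ∑ k ∈ Finset.range N, c0 ^ (k + 2) := by
                  refine Finset.sum_le_sum fun k _ => ?_
                  have h2k : ((k:ℝ) + 2) ≤ (2:ℝ) ^ (k + 1) := by
                    have h := Nat.lt_two_pow_self (n := k + 1)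
                    have : ((k:ℕ) + 2 : ℝ) ≤ ((2:ℕ) ^ (k + 1) : ℝ) := by
                      exact_mod_cast h
                    push_cast at this
                    linarith
                  have hexp : ((k:ℝ) + 2) ≤ 1 / (1 / p (φ k) - 1 / q (φ k)) :=
                    le_trans h2k (hφ k)
                  calc c0 ^ (1 / (1 / p (φ k) - 1 / q (φ k)))
                      ≤ c0 ^ ((k:ℝ) + 2) :=
                        Real.rpow_le_rpow_of_exponent_ge hc00 (by linarith) hexp
                    _ = c0 ^ (k + 2) := by
                        rw [← Real.rpow_natCast c0 (k + 2)]
                        norm_num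
              _ ≤ 2 * c0 ^ 2 := by
                  have heq : ∑ k ∈ Finset.range N, c0 ^ (k + 2)
                      = c0 ^ 2 * ∑ k ∈ Finset.range N, c0 ^ k := by
                    rw [Finset.mul_sum]
                    exact Finset.sum_congr rfl fun k _ => by ring
                  rw [heq]
                  have hg := geom_bound hc00.le hc05 N
                  nlinarith [pow_nonneg hc00.le N, sq_nonneg c0]
        _ ≤ 1 := by linarith
    have hple : vNorm p a ≤ l' := sInf_le ⟨hl'0, hl'T, hmodp⟩
    calc ENNReal.ofReal (c0/2) * vNorm p a
        ≤ ENNReal.ofReal (c0/2) * l' := mul_le_mul_right hple _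
      _ = l := ENNReal.mul_div_cancel hofc ENNReal.ofReal_ne_top
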